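/- arXiv:1712.02069 — 5 statements merged into one kernel-verified Lean document; each statement's English description precedes it below -/
import Mathlib

section
/- For all integers n ≥ 1 and k ≥ 2, the central-type binomial coefficient satisfies (1/(4(k−1)n)) · (k^k/(k−1)^{k−1})^n < C(k n, n) < (k^k/(k−1)^{k−1})^n, where C(k n, n) denotes the binomial coefficient 'k n choose n'. -/
/-!
Write `k = m + 1` and `N = k n`. The terms `C(N, j) m^(N - j)` of the binomial expansion of
`(m + 1)^N` have consecutive ratios `(N - j) / (m (j + 1))`, so they increase up to `j = n` and
decrease afterwards. Hence the term `C(N, n) m^(m n)` is strictly smaller than the whole sum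
`(m + 1)^N`, but at least its average `(m + 1)^N / (N + 1)`, and `N + 1 < 4 m n`.
-/

open Finset

def binomTerm (m N j : ℕ) : ℕ := N.choose j * m ^ (N - j)

namespace binomTerm

variable {m N : ℕ}

theorem sum_range : ∑ j ∈ range (N + 1), binomTerm m N j = (m + 1) ^ N := by
  simp [binomTerm, add_comm m 1, add_pow, mul_comm]

theorem succ_mul (j : ℕ) :
    binomTerm m N (j + 1) * (m * (j + 1)) = binomTerm m N j * (N - j) := by
  unfold binomTerm
  rcases lt_or_ge j N with hj | hj
  · have hNj : N - j = N - (j + 1) + 1 := by omega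
    calc N.choose (j + 1) * m ^ (N - (j + 1)) * (m * (j + 1))
        = N.choose (j + 1) * (j + 1) * m ^ (N - (j + 1)) * m := by ring
      _ = N.choose j * (N - j) * m ^ (N - (j + 1)) * m := by rw [Nat.choose_succ_right_eq]
      _ = N.choose j * m ^ (N - j) * (N - j) := by rw [hNj, pow_succ]; ring
  · simp [Nat.choose_eq_zero_of_lt (Nat.lt_succ_of_le hj), Nat.sub_eq_zero_of_le hj]

theorem le_succ (hm : 0 < m) {j : ℕ} (h : m * (j + 1) + j ≤ N) :
    binomTerm m N j ≤ binomTerm m N (j + 1) := by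
  refine Nat.le_of_mul_le_mul_right ?_ (by positivity : 0 < m * (j + 1))
  rw [succ_mul]
  exact Nat.mul_le_mul_left _ (by omega)

theorem succ_le (hm : 0 < m) {j : ℕ} (h : N ≤ m * (j + 1) + j) :
    binomTerm m N (j + 1) ≤ binomTerm m N j := by
  refine Nat.le_of_mul_le_mul_right ?_ (by positivity : 0 < m * (j + 1))
  rw [succ_mul]
  exact Nat.mul_le_mul_left _ (by omega)

theorem le_at_mode (hm : 0 < m) {n : ℕ} (h₁ : m * n + n ≤ N + 1) (h₂ : N ≤ m * (n + 1) + n)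
    (j : ℕ) : binomTerm m N j ≤ binomTerm m N n := by
  rcases le_total j n with hj | hj
  · have : Antitone fun d ↦ binomTerm m N (n - d) := by
      refine antitone_nat_of_succ_le fun d ↦ ?_
      rcases lt_or_ge d n with hd | hd
      · rw [show n - d = n - (d + 1) + 1 by omega]
        refine le_succ hm ?_
        have : m * (n - (d + 1) + 1) ≤ m * n := Nat.mul_le_mul_left m (by omega)
        omega
      · rw [Nat.sub_eq_zero_of_le hd, Nat.sub_eq_zero_of_le (by omega)]
    simpa [Nat.sub_sub_self hj] using this (Nat.zero_le (n - j))
  · refine Nat.rel_of_forall_rel_succ_of_le_of_le (· ≥ ·) (fun i hi ↦ succ_le hm ?_) le_rfl hj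
    have : m * (n + 1) ≤ m * (i + 1) := Nat.mul_le_mul_left m (by omega)
    omega

theorem lt_pow_succ (hm : 0 < m) {n : ℕ} (hn : n ≠ 0) (hnN : n ≤ N) :
    binomTerm m N n < (m + 1) ^ N := by
  rw [← sum_range]
  refine single_lt_sum hn.symm (mem_range.2 (by omega)) (mem_range.2 (by omega)) ?_
    fun _ _ _ ↦ Nat.zero_le _
  simpa [binomTerm] using pow_pos hm N

theorem pow_succ_le_card_mul_at_mode (hm : 0 < m) {n : ℕ} (h₁ : m * n + n ≤ N + 1)
    (h₂ : N ≤ m * (n + 1) + n) : (m + 1) ^ N ≤ (N + 1) * binomTerm m N n := by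
  rw [← sum_range]
  simpa using sum_le_card_nsmul (range (N + 1)) _ _ fun j _ ↦ le_at_mode hm h₁ h₂ j

end binomTerm

section Sondow

variable {m n : ℕ}

theorem binomTerm_succ_mul_self :
    binomTerm m ((m + 1) * n) n = ((m + 1) * n).choose n * m ^ (m * n) := by
  rw [binomTerm, add_mul, one_mul, Nat.add_sub_cancel]

theorem choose_mul_pow_lt_pow (hm : 0 < m) (hn : 0 < n) :
    ((m + 1) * n).choose n * m ^ (m * n) < (m + 1) ^ ((m + 1) * n) :=
  binomTerm_succ_mul_self ▸ binomTerm.lt_pow_succ hm hn.ne' (by nlinarith)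

theorem pow_lt_mul_choose_mul_pow (hm : 0 < m) (hn : 0 < n) :
    (m + 1) ^ ((m + 1) * n) < 4 * m * n * (((m + 1) * n).choose n * m ^ (m * n)) := by
  have hcount : (m + 1) * n + 1 < 4 * m * n := by nlinarith
  calc (m + 1) ^ ((m + 1) * n)
      ≤ ((m + 1) * n + 1) * binomTerm m ((m + 1) * n) n :=
        binomTerm.pow_succ_le_card_mul_at_mode hm (by nlinarith) (by nlinarith)
    _ < 4 * m * n * (((m + 1) * n).choose n * m ^ (m * n)) := by
        rw [binomTerm_succ_mul_self]
        exact Nat.mul_lt_mul_of_pos_right hcount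
          (Nat.mul_pos (Nat.choose_pos (by nlinarith)) (by positivity))

end Sondow

/-- Sondow's bounds: for integers `n ≥ 1` and `k ≥ 2`,
`(1/(4(k−1)n)) · (k^k/(k−1)^(k−1))^n < C(kn, n) < (k^k/(k−1)^(k−1))^n`. -/
theorem sondow_binomial_bounds (n k : ℕ) (hn : 1 ≤ n) (hk : 2 ≤ k) :
    (1 / (4 * ((k : ℝ) - 1) * n)) *
        ((k : ℝ) ^ k / ((k : ℝ) - 1) ^ (k - 1)) ^ n
      < (Nat.choose (k * n) n : ℝ) ∧
    (Nat.choose (k * n) n : ℝ)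
      < ((k : ℝ) ^ k / ((k : ℝ) - 1) ^ (k - 1)) ^ n := by
  obtain ⟨m, rfl⟩ : ∃ m, k = m + 1 := ⟨k - 1, by omega⟩
  have hm : 0 < m := by omega
  have hratio : (((m + 1 : ℕ) : ℝ) ^ (m + 1) / (((m + 1 : ℕ) : ℝ) - 1) ^ (m + 1 - 1)) ^ n
      = (((m + 1) ^ ((m + 1) * n) : ℕ) : ℝ) / ((m ^ (m * n) : ℕ) : ℝ) := by
    push_cast
    rw [div_pow, ← pow_mul, ← pow_mul, add_sub_cancel_right]
  have hfactor : 4 * (((m + 1 : ℕ) : ℝ) - 1) * n = ((4 * m * n : ℕ) : ℝ) := by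
    push_cast; ring
  rw [hratio, hfactor]
  constructor
  · rw [div_mul_div_comm, one_mul, div_lt_iff₀ (by positivity)]
    exact_mod_cast (pow_lt_mul_choose_mul_pow hm hn).trans_eq (by ring)
  · rw [lt_div_iff₀ (by positivity)]
    exact_mod_cast choose_mul_pow_lt_pow hm hn
end

section
/- Let n ≥ 1 and k ≥ 2 be integers and let q ∈ (0,1) satisfy the equation (1−q)^{k n} = C(k n, n) · (1−q)^{(k−1)n} · q^n. Then q > 1/(1 + k^k/(k−1)^{k−1}). -/
/-!
Cancelling `(1 - q)^((k-1)n)` turns the equation into `((1 - q) / q)^n = C(kn, n)`. Comparing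
`C(kn, n) x^n` with the full binomial expansion of `(1 + x)^(kn)` at `x = 1/(k-1)` gives
`C(kn, n) < (k^k / (k-1)^(k-1))^n`, hence `(1 - q) / q < k^k / (k-1)^(k-1)`.
-/

/-- Strict because the expansion of `(1 + x)^m` also contains the constant term `1`. -/
theorem Nat.cast_choose_mul_pow_lt_one_add_pow {R : Type*} [CommSemiring R] [PartialOrder R]
    [IsStrictOrderedRing R] {x : R} (hx : 0 < x) (m : ℕ) {n : ℕ} (hn : n ≠ 0) :
    (m.choose n : R) * x ^ n < (1 + x) ^ m := by
  rcases lt_or_ge m n with hmn | hnm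
  · rw [Nat.choose_eq_zero_of_lt hmn, Nat.cast_zero, zero_mul]
    positivity
  have hterm : ∀ i ∈ Finset.range (m + 1),
      x ^ i * 1 ^ (m - i) * (m.choose i : R) = (m.choose i : R) * x ^ i := by
    intro i _
    rw [one_pow, mul_one, mul_comm]
  rw [add_comm, add_pow, Finset.sum_congr rfl hterm]
  exact Finset.single_lt_sum (f := fun i ↦ (m.choose i : R) * x ^ i) hn.symm
    (Finset.mem_range.2 (Nat.lt_succ_of_le hnm)) (Finset.mem_range.2 m.succ_pos) (by simp) fun i _ _ ↦ by positivity

theorem Nat.mul_eq_sub_one_mul_add {k : ℕ} (hk : 1 ≤ k) (n : ℕ) : k * n = (k - 1) * n + n := by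
  rw [← Nat.succ_mul, Nat.succ_eq_add_one, Nat.sub_add_cancel hk]

theorem Nat.cast_choose_mul_lt_pow {k : ℕ} (hk : 2 ≤ k) {n : ℕ} (hn : n ≠ 0) :
    ((k * n).choose n : ℝ) < ((k : ℝ) ^ k / ((k : ℝ) - 1) ^ (k - 1)) ^ n := by
  have hk1 : (0 : ℝ) < k - 1 := by
    have : (2 : ℝ) ≤ k := by exact_mod_cast hk
    linarith
  have hx : (0 : ℝ) < 1 / (k - 1) := one_div_pos.2 hk1
  have hexpand : (1 + 1 / ((k : ℝ) - 1)) ^ (k * n)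
      = ((k : ℝ) ^ k / ((k : ℝ) - 1) ^ (k - 1)) ^ n * (1 / ((k : ℝ) - 1)) ^ n := by
    rw [one_add_div hk1.ne', sub_add_cancel, div_pow, div_pow, div_pow, one_pow, ← pow_mul,
      ← pow_mul, mul_one_div, div_div, ← pow_add, ← Nat.mul_eq_sub_one_mul_add (by omega)]
  have := Nat.cast_choose_mul_pow_lt_one_add_pow hx (k * n) hn
  rwa [hexpand, mul_lt_mul_iff_of_pos_right (pow_pos hx n)] at this

/-- If `q ∈ (0,1)` satisfies `(1−q)^(kn) = C(kn, n) · (1−q)^((k−1)n) · q^n`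
for integers `n ≥ 1`, `k ≥ 2`, then `q > 1/(1 + k^k/(k−1)^(k−1))`. -/
theorem q_lower_bound (n k : ℕ) (hn : 1 ≤ n) (hk : 2 ≤ k) (q : ℝ)
    (hq0 : 0 < q) (hq1 : q < 1)
    (heq : (1 - q) ^ (k * n) =
      (Nat.choose (k * n) n : ℝ) * (1 - q) ^ ((k - 1) * n) * q ^ n) :
    1 / (1 + (k : ℝ) ^ k / ((k : ℝ) - 1) ^ (k - 1)) < q := by
  set A : ℝ := (k : ℝ) ^ k / ((k : ℝ) - 1) ^ (k - 1)
  have hA : 0 < A := by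
    have : (2 : ℝ) ≤ k := by exact_mod_cast hk
    exact div_pos (by positivity) (pow_pos (by linarith) _)
  have h1q : 0 < 1 - q := sub_pos.2 hq1
  have hcancel : (1 - q) ^ n = ((k * n).choose n : ℝ) * q ^ n := by
    refine mul_left_cancel₀ (pow_ne_zero ((k - 1) * n) h1q.ne') ?_
    rw [← pow_add, ← Nat.mul_eq_sub_one_mul_add (by omega), heq]
    ring
  have hpow : (1 - q) ^ n < (A * q) ^ n := by
    rw [hcancel, mul_pow]
    exact mul_lt_mul_of_pos_right (Nat.cast_choose_mul_lt_pow hk (by omega)) (pow_pos hq0 n)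
  have hlin : 1 - q < A * q := lt_of_pow_lt_pow_left₀ n (by positivity) hpow
  rw [div_lt_iff₀ (by positivity)]
  linarith
end

section
/- Let n ≥ 1 and k ≥ 2 be integers and let q ∈ (0,1) satisfy the equation (1−q)^{k n} = C(k n, n) · (1−q)^{(k−1)n} · q^n. Then q < 1/(1 + (4(k−1)n)^{−1/n} · k^k/(k−1)^{k−1}). -/
/-!
Write `k = c + 1` and `m = (c + 1) n`. The equation says `((1 - q) / q) ^ n = C(m, n)`.
In the binomial expansion of `(1 + c) ^ m` the terms `C(m, i) c ^ (m - i)` increase up to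
`i = n` and decrease afterwards (consecutive terms have ratio `(m - i) / ((i + 1) c)`), so
`(c + 1) ^ m ≤ (m + 1) C(m, n) c ^ (c n) < 4 c n C(m, n) c ^ (c n)`. Taking `n`-th roots gives
`(1 - q) / q > (4 c n) ^ (-1/n) (c + 1) ^ (c + 1) / c ^ c`, which rearranges to the bound.
-/

open Finset

namespace Nat

theorem choose_succ_mul_pow_mul_eq (m c i : ℕ) (hi : i < m) :
    m.choose (i + 1) * c ^ (m - (i + 1)) * ((i + 1) * c) = m.choose i * c ^ (m - i) * (m - i) := by
  have h := choose_succ_right_eq m i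
  rw [show m - i = m - (i + 1) + 1 by omega] at h ⊢
  calc _ = m.choose (i + 1) * (i + 1) * (c ^ (m - (i + 1)) * c) := by ring
    _ = _ := by rw [h, pow_succ]; ring

theorem choose_mul_pow_le_choose_mul_pow (c n i : ℕ) :
    ((c + 1) * n).choose i * c ^ ((c + 1) * n - i) ≤ ((c + 1) * n).choose n * c ^ (c * n) := by
  set m := (c + 1) * n with hm
  have hm' : m = n * c + n := by rw [hm]; ring
  set t : ℕ → ℕ := fun j ↦ m.choose j * c ^ (m - j)
  have up : MonotoneOn t (Set.Iic n) :=
    monotoneOn_of_le_add_one Set.ordConnected_Iic fun j _ _ (hj : j + 1 ≤ n) ↦ by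
      have hjm : j < m := by omega
      have hcj : (j + 1) * c ≤ m - j := by have := Nat.mul_le_mul_right c hj; omega
      refine Nat.le_of_mul_le_mul_right ?_ (Nat.sub_pos_of_lt hjm)
      calc t j * (m - j) = t (j + 1) * ((j + 1) * c) := (choose_succ_mul_pow_mul_eq m c j hjm).symm
        _ ≤ t (j + 1) * (m - j) := Nat.mul_le_mul_left _ hcj
  have down : AntitoneOn t (Set.Ici n) :=
    antitoneOn_of_add_one_le Set.ordConnected_Ici fun j _ (hj : n ≤ j) _ ↦ by
      rcases lt_or_ge j m with hjm | hjm
      · have hcj : m - j ≤ (j + 1) * c := by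
          have := Nat.mul_le_mul_right c (show n ≤ j + 1 by omega); omega
        refine Nat.le_of_mul_le_mul_right ?_ (lt_of_lt_of_le (Nat.sub_pos_of_lt hjm) hcj)
        calc t (j + 1) * ((j + 1) * c) = t j * (m - j) := choose_succ_mul_pow_mul_eq m c j hjm
          _ ≤ t j * ((j + 1) * c) := Nat.mul_le_mul_left _ hcj
      · simp only [t]
        rw [choose_eq_zero_of_lt (by omega : m < j + 1), zero_mul]
        exact Nat.zero_le _
  have hmn : m - n = c * n := by rw [hm', Nat.add_sub_cancel, mul_comm]
  rcases le_total i n with h | h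
  · simpa [t, hmn] using up h (Set.mem_Iic.2 le_rfl) h
  · simpa [t, hmn] using down (Set.mem_Ici.2 le_rfl) h h

theorem succ_pow_le_mul_choose_mul_pow (c n : ℕ) :
    (c + 1) ^ ((c + 1) * n) ≤ ((c + 1) * n + 1) * (((c + 1) * n).choose n * c ^ (c * n)) :=
  calc (c + 1) ^ ((c + 1) * n)
      = ∑ i ∈ range ((c + 1) * n + 1), ((c + 1) * n).choose i * c ^ ((c + 1) * n - i) := by
        have h := add_pow 1 c ((c + 1) * n)
        rw [add_comm 1 c] at h
        simpa only [one_pow, one_mul, Nat.cast_id, mul_comm] using h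
    _ ≤ ∑ _ ∈ range ((c + 1) * n + 1), ((c + 1) * n).choose n * c ^ (c * n) :=
        sum_le_sum fun i _ ↦ choose_mul_pow_le_choose_mul_pow c n i
    _ = _ := by simp

theorem succ_pow_lt_four_mul_choose_mul_pow {c n : ℕ} (hc : 1 ≤ c) (hn : 1 ≤ n) :
    (c + 1) ^ ((c + 1) * n) < 4 * c * n * ((c + 1) * n).choose n * c ^ (c * n) := by
  rw [mul_assoc _ (choose _ _)]
  refine (succ_pow_le_mul_choose_mul_pow c n).trans_lt (Nat.mul_lt_mul_of_pos_right ?_ ?_)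
  · nlinarith
  · exact Nat.mul_pos (choose_pos (Nat.le_mul_of_pos_left n (succ_pos c))) (by positivity)

end Nat

theorem div_pow_eq_of_pow_add_eq {K : Type*} [Field K] {a b C : K} {j n : ℕ} (ha : a ≠ 0)
    (hb : b ≠ 0) (h : a ^ (j + n) = C * a ^ j * b ^ n) : (a / b) ^ n = C := by
  rw [div_pow, div_eq_iff (pow_ne_zero n hb)]
  refine mul_left_cancel₀ (pow_ne_zero j ha) ?_
  rw [← pow_add, h]
  ring

theorem Real.rpow_neg_one_div_pow {x : ℝ} (hx : 0 ≤ x) {n : ℕ} (hn : n ≠ 0) :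
    (x ^ (-(1 : ℝ) / n)) ^ n = x⁻¹ := by
  rw [neg_div, one_div, Real.rpow_neg hx, inv_pow, Real.rpow_inv_natCast_pow hx hn]

/-- If `q ∈ (0,1)` satisfies `(1−q)^(kn) = C(kn, n) · (1−q)^((k−1)n) · q^n`
for integers `n ≥ 1`, `k ≥ 2`, then
`q < 1/(1 + (4(k−1)n)^(−1/n) · k^k/(k−1)^(k−1))`. -/
theorem q_upper_bound (n k : ℕ) (hn : 1 ≤ n) (hk : 2 ≤ k) (q : ℝ)
    (hq0 : 0 < q) (hq1 : q < 1)
    (heq : (1 - q) ^ (k * n) =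
      (Nat.choose (k * n) n : ℝ) * (1 - q) ^ ((k - 1) * n) * q ^ n) :
    q < 1 / (1 + (4 * ((k : ℝ) - 1) * n) ^ (-(1 : ℝ) / n) *
      ((k : ℝ) ^ k / ((k : ℝ) - 1) ^ (k - 1))) := by
  obtain ⟨c, rfl⟩ : ∃ c, k = c + 1 := ⟨k - 1, by omega⟩
  have hc : 1 ≤ c := by omega
  simp only [Nat.add_sub_cancel, Nat.cast_add, Nat.cast_one, add_sub_cancel_right] at heq ⊢
  set A := (4 * (c : ℝ) * n) ^ (-(1 : ℝ) / n) * (((c : ℝ) + 1) ^ (c + 1) / (c : ℝ) ^ c)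
  have hratio : ((1 - q) / q) ^ n = ((c + 1) * n).choose n :=
    div_pow_eq_of_pow_add_eq (by linarith) hq0.ne' (by rw [← heq]; ring)
  have hAn : A ^ n < ((1 - q) / q) ^ n := by
    rw [hratio, mul_pow, Real.rpow_neg_one_div_pow (by positivity) (by omega), div_pow,
      ← pow_mul, ← pow_mul, inv_mul_lt_iff₀ (by positivity), div_lt_iff₀ (by positivity)]
    exact_mod_cast Nat.succ_pow_lt_four_mul_choose_mul_pow hc hn
  have hAq := lt_of_pow_lt_pow_left₀ n (div_nonneg (by linarith) hq0.le) hAn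
  rw [lt_div_iff₀ hq0] at hAq
  rw [lt_div_iff₀ (by positivity)]
  linarith
end

section
/- Let n ≥ 1 and k > 2 be integers, and let q ∈ (0,1) satisfy (1−q)^{k n} = C(k n, n) · (1−q)^{(k−1)n} · q^n, with n sufficiently large. Then the probability Q that a Binomial(k n, q) random variable takes a value divisible by n, namely Q = Σ_{i=0}^{k} C(k n, i n) q^{i n} (1−q)^{(k−i)n}, satisfies Q < (k+1)(1−q)^{k n}. -/
/-!
The constraint on `q` says `(1 - q)^n = C(kn, n) q^n`, so the `i`-th term of the sum equals
`C(kn, in) / C(kn, n)^i · (1 - q)^(kn)`. Binomial coefficients are submultiplicative,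
`C(N, a + b) ≤ C(N, a) C(N, b)`, strictly when `a, b > 0` and `a + b ≤ N`; hence each of the
`k + 1` terms is at most `(1 - q)^(kn)`, and the term `i = 2` is strictly smaller.
-/

open Finset

namespace Nat

theorem one_lt_choose_add {a b : ℕ} (ha : 0 < a) (hb : 0 < b) : 1 < (a + b).choose a := by
  obtain ⟨a, rfl⟩ := exists_add_one_eq.mpr ha
  rw [show a + 1 + b = a + b + 1 by omega, choose_succ_succ']
  have : 0 < (a + b).choose a := choose_pos (by omega)
  have : 0 < (a + b).choose (a + 1) := choose_pos (by omega)
  omega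

theorem choose_add_mul_choose_le (N a b : ℕ) :
    N.choose (a + b) * (a + b).choose a ≤ N.choose a * N.choose b := by
  rw [choose_mul (Nat.le_add_right a b), Nat.add_sub_cancel_left]
  exact Nat.mul_le_mul_left _ (choose_le_choose _ (Nat.sub_le N a))

theorem choose_add_le_mul (N a b : ℕ) : N.choose (a + b) ≤ N.choose a * N.choose b :=
  (Nat.le_mul_of_pos_right _ (choose_pos (Nat.le_add_right a b))).trans
    (choose_add_mul_choose_le N a b)

theorem choose_add_lt_mul {N a b : ℕ} (ha : 0 < a) (hb : 0 < b) (hN : a + b ≤ N) :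
    N.choose (a + b) < N.choose a * N.choose b :=
  (Nat.lt_mul_iff_one_lt_right (choose_pos hN)).mpr (one_lt_choose_add ha hb)
    |>.trans_le (choose_add_mul_choose_le N a b)

theorem choose_mul_le_pow (N n i : ℕ) : N.choose (i * n) ≤ N.choose n ^ i := by
  induction i with
  | zero => simp
  | succ i ih =>
    rw [Nat.succ_mul, pow_succ]
    exact (choose_add_le_mul N _ n).trans (Nat.mul_le_mul_right _ ih)

theorem choose_two_mul_lt_sq {N n : ℕ} (hn : 0 < n) (hN : 2 * n ≤ N) :
    N.choose (2 * n) < N.choose n ^ 2 := by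
  rw [two_mul, sq]
  exact choose_add_lt_mul hn hn (by omega)

end Nat

section OrderedCommSemiring

variable {R : Type*} [CommSemiring R] [PartialOrder R]

theorem mul_pow_mul_pow_sub_le [IsOrderedRing R] {C p r b : R} {i k : ℕ} (hi : i ≤ k)
    (hr : r = C * p) (hp : 0 ≤ p) (hr0 : 0 ≤ r) (hb : b ≤ C ^ i) :
    b * p ^ i * r ^ (k - i) ≤ r ^ k := by
  calc b * p ^ i * r ^ (k - i) ≤ C ^ i * p ^ i * r ^ (k - i) := by gcongr
    _ = r ^ k := by rw [← mul_pow, ← hr, ← pow_add, Nat.add_sub_cancel' hi]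

theorem mul_pow_mul_pow_sub_lt [IsStrictOrderedRing R] {C p r b : R} {i k : ℕ} (hi : i ≤ k)
    (hr : r = C * p) (hp : 0 < p) (hr0 : 0 < r) (hb : b < C ^ i) :
    b * p ^ i * r ^ (k - i) < r ^ k := by
  calc b * p ^ i * r ^ (k - i) < C ^ i * p ^ i * r ^ (k - i) := by gcongr
    _ = r ^ k := by rw [← mul_pow, ← hr, ← pow_add, Nat.add_sub_cancel' hi]

theorem sum_mul_pow_mul_pow_sub_lt [IsStrictOrderedRing R] {C p r : R} {b : ℕ → R} {k : ℕ}
    (hk : 2 ≤ k) (hr : r = C * p) (hp : 0 < p) (hr0 : 0 < r) (hb : ∀ i ≤ k, b i ≤ C ^ i)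
    (hb2 : b 2 < C ^ 2) :
    ∑ i ∈ range (k + 1), b i * p ^ i * r ^ (k - i) < (k + 1) * r ^ k := by
  calc ∑ i ∈ range (k + 1), b i * p ^ i * r ^ (k - i)
      < ∑ _i ∈ range (k + 1), r ^ k := by
        refine sum_lt_sum (fun i hi => ?_) ⟨2, mem_range.mpr (by omega), ?_⟩
        · have hik : i ≤ k := Nat.lt_succ_iff.mp (mem_range.mp hi)
          exact mul_pow_mul_pow_sub_le hik hr hp.le hr0.le (hb i hik)
        · exact mul_pow_mul_pow_sub_lt hk hr hp hr0 hb2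
    _ = (k + 1) * r ^ k := by simp

end OrderedCommSemiring

/-- For integers `k > 2` and `n ≥ 1` sufficiently large, if `q ∈ (0,1)` satisfies
`(1−q)^(kn) = C(kn, n) · (1−q)^((k−1)n) · q^n`, then
`Q = Σ_{i=0}^{k} C(kn, in) q^(in) (1−q)^((k−i)n)` satisfies `Q < (k+1)(1−q)^(kn)`. -/
theorem Q_upper_bound (k : ℕ) (hk : 2 < k) :
    ∃ n₀ : ℕ, ∀ n : ℕ, n₀ ≤ n → 1 ≤ n → ∀ q : ℝ, 0 < q → q < 1 →
      (1 - q) ^ (k * n) =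
        (Nat.choose (k * n) n : ℝ) * (1 - q) ^ ((k - 1) * n) * q ^ n →
      ∑ i ∈ Finset.range (k + 1),
          (Nat.choose (k * n) (i * n) : ℝ) * q ^ (i * n) * (1 - q) ^ ((k - i) * n)
        < ((k : ℝ) + 1) * (1 - q) ^ (k * n) := by
  refine ⟨0, fun n _ hn q hq hq1 hyp => ?_⟩
  have hp : 0 < q ^ n := pow_pos hq n
  have hr0 : 0 < (1 - q) ^ n := pow_pos (sub_pos.mpr hq1) n
  have hr : (1 - q) ^ n = (Nat.choose (k * n) n : ℝ) * q ^ n := by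
    rw [pow_mul', pow_mul'] at hyp
    refine mul_left_cancel₀ (pow_ne_zero (k - 1) hr0.ne') ?_
    rw [← pow_succ, Nat.sub_add_cancel (by omega : 1 ≤ k), hyp]
    ring
  simp_rw [pow_mul']
  refine sum_mul_pow_mul_pow_sub_lt hk.le hr hp hr0 (fun i _ => ?_) ?_
  · exact_mod_cast Nat.choose_mul_le_pow (k * n) n i
  · exact_mod_cast Nat.choose_two_mul_lt_sq hn (Nat.mul_le_mul_right n hk.le)
end

section
/- Let n, r, k, N be positive integers with k n ≤ N, and let q ∈ (0,1). Define Q = Σ_{i=0}^{k} C(k n, i n) q^{i n} (1−q)^{(k−i)n}. If C(N, k n) · Q^r < 1, then there exists a sequence of N elements of (ℤ/nℤ)^r, each with all coordinates in {0, 1}, that contains no subsequence of length k n summing to zero; in particular s_{kn}(C_n^r) > N. -/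
/-!
Give each coordinate of each of the `N` vectors an independent Bernoulli(`q`) value in `{0, 1}`;
probabilities are finite sums over all `0/1` arrays, weighted by products of Bernoulli weights.
The vectors indexed by a `kn`-set `s` sum to zero iff in each of the `r` coordinates the number
of ones among them is divisible by `n`. The coordinates are independent, each with probability
`Q`, so the expected number of zero-sum `kn`-sets is `C(N, kn) · Q ^ r < 1` and some array has
none. Such a sequence gives `s_{kn} > N`: shorter sequences embed in it, and by pigeonhole long
enough sequences do contain zero-sum `kn`-subsequences (as `kn • y = 0`), so the infimum is not
the junk value `sInf ∅ = 0`.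
-/

/-- The generalized Erdős–Ginzburg–Ziv constant `s_m(G)`: the minimal `N` such that
every sequence of `N` elements of `G` contains a subsequence of length `m`
whose sum is zero. -/
noncomputable def EGZConst (G : Type*) [AddCommGroup G] (m : ℕ) : ℕ :=
  sInf {N : ℕ | ∀ f : Fin N → G, ∃ s : Finset (Fin N), s.card = m ∧ ∑ i ∈ s, f i = 0}

open Finset

theorem sum_range_filter_dvd {M : Type*} [AddCommMonoid M] {n : ℕ} (hn : 0 < n) (k : ℕ)
    (f : ℕ → M) : ∑ j ∈ range (k * n + 1) with n ∣ j, f j = ∑ i ∈ range (k + 1), f (i * n) := by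
  have : {j ∈ range (k * n + 1) | n ∣ j} = (range (k + 1)).image (· * n) := by
    ext j
    simp only [mem_filter, mem_range, mem_image]
    constructor
    · rintro ⟨hj, i, rfl⟩
      exact ⟨i, by nlinarith, mul_comm _ _⟩
    · rintro ⟨i, hi, rfl⟩
      exact ⟨by nlinarith, dvd_mul_left _ _⟩
  rw [this, sum_image fun i _ j _ h => Nat.eq_of_mul_eq_mul_right hn h]

section ProductWeight

variable {α β : Type*} [Fintype α] [DecidableEq α] [Fintype β] {w : β → ℝ}

theorem sum_prod_eq_one (hw : ∑ b, w b = 1) : ∑ c : α → β, ∏ a, w (c a) = 1 := by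
  rw [← Fintype.prod_sum]
  simp [hw]

theorem sum_prod_mul_comp_restrict (hw : ∑ b, w b = 1) (p : α → Prop) [DecidablePred p]
    (g : ({a // p a} → β) → ℝ) :
    ∑ c : α → β, (∏ a, w (c a)) * g (fun a => c a) =
      ∑ d : {a // p a} → β, (∏ a, w (d a)) * g d := by
  rw [← (Equiv.piEquivPiSubtypeProd p fun _ => β).symm.sum_comp, Fintype.sum_prod_type]
  refine sum_congr rfl fun d _ => ?_
  simp_rw [← Fintype.prod_subtype_mul_prod_subtype p]
  simp only [Equiv.piEquivPiSubtypeProd_symm_apply, Subtype.prop, fun x : {x // ¬ p x} => x.2,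
    dite_true, dite_false, Subtype.coe_eta]
  rw [← sum_mul, ← mul_sum, sum_prod_eq_one hw, mul_one]

end ProductWeight

def bernoulliWeight (q : ℝ) (b : Bool) : ℝ := if b then q else 1 - q

theorem bernoulliWeight_nonneg {q : ℝ} (h0 : 0 ≤ q) (h1 : q ≤ 1) (b : Bool) :
    0 ≤ bernoulliWeight q b := by
  cases b <;> simp [bernoulliWeight] <;> linarith

theorem sum_bernoulliWeight (q : ℝ) : ∑ b, bernoulliWeight q b = 1 := by
  simp [bernoulliWeight]

section BernoulliArrays

variable {ι : Type*} [Fintype ι] [DecidableEq ι]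

theorem prod_bernoulliWeight (q : ℝ) (c : ι → Bool) :
    ∏ i, bernoulliWeight q (c i) = q ^ #{i | c i} * (1 - q) ^ (Fintype.card ι - #{i | c i}) := by
  rw [← card_compl, compl_filter]
  simp [bernoulliWeight, prod_ite]

theorem sum_prod_bernoulliWeight_mul (q : ℝ) (g : ℕ → ℝ) :
    ∑ c : ι → Bool, (∏ i, bernoulliWeight q (c i)) * g #{i | c i} =
      ∑ j ∈ range (Fintype.card ι + 1),
        (Fintype.card ι).choose j * (q ^ j * (1 - q) ^ (Fintype.card ι - j) * g j) := by
  have hbij : Function.Bijective fun (t : Finset ι) i => decide (i ∈ t) := by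
    refine ⟨fun s t h => ?_, fun c => ⟨({i | c i} : Finset ι), by simp⟩⟩
    ext i; simpa using congrFun h i
  rw [← Fintype.sum_bijective _ hbij (fun t => q ^ #t * (1 - q) ^ (Fintype.card ι - #t) * g #t) _
    fun t => by simp [prod_bernoulliWeight], ← powerset_univ,
    sum_powerset_apply_card fun j => q ^ j * (1 - q) ^ (Fintype.card ι - j) * g j, card_univ]
  simp [nsmul_eq_mul]

/-- `Q` of the paper: the probability that a `Bin(kn, q)` count is divisible by `n`. -/
def binomialDvdProb (n k : ℕ) (q : ℝ) : ℝ :=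
  ∑ i ∈ range (k + 1), (Nat.choose (k * n) (i * n) : ℝ) * q ^ (i * n) * (1 - q) ^ ((k - i) * n)

theorem sum_prod_bernoulliWeight_mul_dvd_card {n k : ℕ} (hn : 0 < n) (q : ℝ)
    (hι : Fintype.card ι = k * n) :
    ∑ c : ι → Bool, (∏ i, bernoulliWeight q (c i)) * (if n ∣ #{i | c i} then 1 else 0) =
      binomialDvdProb n k q := by
  rw [sum_prod_bernoulliWeight_mul q fun j => if n ∣ j then 1 else 0, hι]
  simp only [mul_ite, mul_one, mul_zero]
  rw [← sum_filter, sum_range_filter_dvd hn]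
  refine sum_congr rfl fun i _ => ?_
  rw [← Nat.sub_mul]
  ring

theorem sum_prod_bernoulliWeight_mul_dvd_card_filter {n k : ℕ} (hn : 0 < n) (q : ℝ)
    (s : Finset ι) (hs : #s = k * n) :
    ∑ c : ι → Bool, (∏ i, bernoulliWeight q (c i)) * (if n ∣ #{i ∈ s | c i} then 1 else 0) =
      binomialDvdProb n k q := by
  have hcard (c : ι → Bool) : #{i ∈ s | c i} = #{i : {a // a ∈ s} | c i} := by
    rw [card_filter, card_filter, ← sum_coe_sort s]
  simp only [hcard]
  rw [sum_prod_mul_comp_restrict (sum_bernoulliWeight q) (· ∈ s)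
    fun d : {a // a ∈ s} → Bool => if n ∣ #{i | d i} then 1 else 0]
  convert sum_prod_bernoulliWeight_mul_dvd_card hn q ((Fintype.card_coe s).trans hs)

theorem sum_prod_bernoulliWeight_mul_forall_dvd_card_filter {γ : Type*} [Fintype γ] [DecidableEq γ]
    {n k : ℕ} (hn : 0 < n) (q : ℝ) (s : Finset ι) (hs : #s = k * n) :
    ∑ x : ι → γ → Bool, (∏ i, ∏ j, bernoulliWeight q (x i j)) *
        (if ∀ j, n ∣ #{i ∈ s | x i j} then 1 else 0) =
      binomialDvdProb n k q ^ Fintype.card γ := by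
  calc _ = ∑ y : γ → ι → Bool, ∏ j,
        (∏ i, bernoulliWeight q (y j i)) * (if n ∣ #{i ∈ s | y j i} then 1 else 0) :=
        Fintype.sum_equiv (Equiv.piComm _) _ _ fun x => by
          simp only [Equiv.piComm_apply, prod_mul_distrib, prod_boole, mem_univ, true_implies]
          rw [prod_comm]
    _ = _ := by
      rw [← sum_prod_bernoulliWeight_mul_dvd_card_filter hn q s hs, ← card_univ, ← prod_const,
        Fintype.prod_sum]

theorem sum_powersetCard_sum_prod_bernoulliWeight_mul_forall_dvd_card_filter {γ : Type*}
    [Fintype γ] [DecidableEq γ] {n k : ℕ} (hn : 0 < n) (q : ℝ) :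
    ∑ s ∈ powersetCard (k * n) (univ : Finset ι), ∑ x : ι → γ → Bool,
        (∏ i, ∏ j, bernoulliWeight q (x i j)) * (if ∀ j, n ∣ #{i ∈ s | x i j} then 1 else 0) =
      (Fintype.card ι).choose (k * n) * binomialDvdProb n k q ^ Fintype.card γ := by
  rw [sum_congr rfl fun s hs => sum_prod_bernoulliWeight_mul_forall_dvd_card_filter hn q s
    (mem_powersetCard_univ.1 hs), sum_const, card_powersetCard, card_univ, nsmul_eq_mul]

end BernoulliArrays

theorem sum_ite_one_zero_eq_zero_iff {α γ : Type*} {n : ℕ} (x : α → γ → Bool) (s : Finset α) :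
    ∑ a ∈ s, (fun j => if x a j then (1 : ZMod n) else 0) = 0 ↔ ∀ j, n ∣ #{a ∈ s | x a j} := by
  simp only [funext_iff, Finset.sum_apply, sum_boole, Pi.zero_apply, ZMod.natCast_eq_zero_iff]

theorem exists_forall_not_of_sum_sum_lt_one {α β : Type*} [Fintype α] {w : α → ℝ}
    (hw0 : ∀ x, 0 ≤ w x) (hw1 : ∑ x, w x = 1) (B : Finset β) (E : β → α → Prop)
    [∀ b, DecidablePred (E b)] (h : ∑ b ∈ B, ∑ x, w x * (if E b x then 1 else 0) < 1) :
    ∃ x, ∀ b ∈ B, ¬ E b x := by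
  by_contra! hE
  refine h.not_ge ?_
  calc 1 = ∑ x, w x := hw1.symm
    _ ≤ ∑ x, ∑ b ∈ B, w x * (if E b x then 1 else 0) := sum_le_sum fun x _ => by
        obtain ⟨b, hb, hbx⟩ := hE x
        calc w x = w x * (if E b x then 1 else 0) := by rw [if_pos hbx, mul_one]
          _ ≤ _ := single_le_sum (f := fun b => w x * (if E b x then 1 else 0))
            (fun b _ => mul_nonneg (hw0 x) (by split_ifs <;> norm_num)) hb
    _ = _ := sum_comm

theorem exists_card_eq_sum_eq_zero {G α : Type*} [AddCommGroup G] [Fintype G] [DecidableEq G]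
    [Fintype α] {m : ℕ} (hm : ∀ y : G, m • y = 0) (h : Fintype.card G * m ≤ Fintype.card α)
    (f : α → G) : ∃ s : Finset α, s.card = m ∧ ∑ i ∈ s, f i = 0 := by
  obtain ⟨y, -, hy⟩ := exists_le_card_fiber_of_mul_le_card_of_maps_to
    (fun a _ => mem_univ (f a)) univ_nonempty h
  obtain ⟨s, hsy, hs⟩ := exists_subset_card_eq hy
  refine ⟨s, hs, ?_⟩
  rw [sum_congr rfl fun i hi => (mem_filter.1 (hsy hi)).2, sum_const, hs, hm]

theorem lt_EGZConst {G : Type*} [AddCommGroup G] [Finite G] {m N : ℕ} (hm : ∀ y : G, m • y = 0)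
    (f : Fin N → G) (hf : ¬ ∃ s : Finset (Fin N), s.card = m ∧ ∑ i ∈ s, f i = 0) :
    N < EGZConst G m := by
  classical
  have := Fintype.ofFinite G
  rw [EGZConst, Nat.lt_iff_add_one_le]
  apply le_csInf
  · exact ⟨Fintype.card G * m, fun g => exists_card_eq_sum_eq_zero hm (by simp) g⟩
  intro M hM
  refine Nat.lt_of_not_le fun hMN => hf ?_
  obtain ⟨s, hs, hsum⟩ := hM fun i => f (Fin.castLE hMN i)
  exact ⟨s.map (Fin.castLEEmb hMN), by rw [card_map, hs], by rw [sum_map]; exact hsum⟩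

theorem first_moment_step_general (n r k N : ℕ) (hn : 0 < n) (q : ℝ) (hq0 : 0 < q) (hq1 : q < 1)
    (hE : (Nat.choose N (k * n) : ℝ) *
        (∑ i ∈ Finset.range (k + 1),
          (Nat.choose (k * n) (i * n) : ℝ) * q ^ (i * n) * (1 - q) ^ ((k - i) * n)) ^ r
      < 1) :
    (∃ f : Fin N → (Fin r → ZMod n),
        (∀ i j, f i j = 0 ∨ f i j = 1) ∧
        ¬ ∃ s : Finset (Fin N), s.card = k * n ∧ ∑ i ∈ s, f i = 0) ∧
    N < EGZConst (Fin r → ZMod n) (k * n) := by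
  have : NeZero n := ⟨hn.ne'⟩
  have hcount := sum_powersetCard_sum_prod_bernoulliWeight_mul_forall_dvd_card_filter
    (ι := Fin N) (γ := Fin r) (k := k) hn q
  rw [Fintype.card_fin, Fintype.card_fin] at hcount
  obtain ⟨x, hx⟩ := exists_forall_not_of_sum_sum_lt_one
    (w := fun x : Fin N → Fin r → Bool => ∏ i, ∏ j, bernoulliWeight q (x i j))
    (fun x => prod_nonneg fun i _ => prod_nonneg fun j _ =>
      bernoulliWeight_nonneg hq0.le hq1.le _)
    (sum_prod_eq_one (sum_prod_eq_one (sum_bernoulliWeight q)))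
    (powersetCard (k * n) univ) (fun s x => ∀ j, n ∣ #{i ∈ s | x i j}) <| by
      -- `convert` reconciles the `Fin`-specific instance `Nat.decidableForallFin`
      convert hcount.trans_lt hE
  set f : Fin N → Fin r → ZMod n := fun i j => if x i j then 1 else 0
  have hf : ¬ ∃ s : Finset (Fin N), s.card = k * n ∧ ∑ i ∈ s, f i = 0 := fun ⟨s, hs, hsum⟩ =>
    hx s (mem_powersetCard_univ.2 hs) ((sum_ite_one_zero_eq_zero_iff x s).1 hsum)
  refine ⟨⟨f, fun i j => ?_, hf⟩, lt_EGZConst (fun y => ?_) f hf⟩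
  · by_cases h : x i j <;> simp [f, h]
  · ext j
    simp [nsmul_eq_mul]

/-- First-moment step: if `C(N, kn) · Q^r < 1` where
`Q = Σ_{i=0}^{k} C(kn, in) q^(in) (1−q)^((k−i)n)`, then there is a sequence of `N`
elements of `(ℤ/nℤ)^r` with all coordinates in `{0,1}` and no zero-sum subsequence
of length `kn`; in particular `s_{kn}(C_n^r) > N`. -/
theorem first_moment_step (n r k N : ℕ) (hn : 0 < n) (hr : 0 < r) (hk : 0 < k)
    (hN : 0 < N) (hkN : k * n ≤ N) (q : ℝ) (hq0 : 0 < q) (hq1 : q < 1)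
    (hE : (Nat.choose N (k * n) : ℝ) *
        (∑ i ∈ Finset.range (k + 1),
          (Nat.choose (k * n) (i * n) : ℝ) * q ^ (i * n) * (1 - q) ^ ((k - i) * n)) ^ r
      < 1) :
    (∃ f : Fin N → (Fin r → ZMod n),
        (∀ i j, f i j = 0 ∨ f i j = 1) ∧
        ¬ ∃ s : Finset (Fin N), s.card = k * n ∧ ∑ i ∈ s, f i = 0) ∧
    N < EGZConst (Fin r → ZMod n) (k * n) :=
  first_moment_step_general n r k N hn q hq0 hq1 hE
end
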